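/- Let n ≥ 1 and let Λ be the symbol of the bipartition 1^{2n}.∅ with charge σ₀ = (0,−1). Suppose t ≥ 0 is an integer with t² + t ≤ 2n and μ is a bipartition of 2n − t² − t with symbol Λ' of charge σ_t. If Λ' ⊲ Λ, then ϖ_{Λ'} equals the composition of the symbol of the bipartition ∅.1^{2n} with charge σ₀, i.e. the non-increasing enumeration of the multiset consisting of every integer z ≤ 0 taken twice except z = −2n, which is taken once. -/

import Mathlib

open scoped Classical

noncomputable section

/-- A partition: an antitone, eventually zero sequence of natural numbers.
`parts k` is the `(k+1)`-st part `λ_{k+1}`. -/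
structure PartitionSeq where
  parts : ℕ → ℕ
  antitone' : Antitone parts
  exists_zero : ∃ N, parts N = 0

namespace PartitionSeq

lemma sorted_getD_antitone {l : List ℕ} (h : l.Pairwise (· ≥ ·)) :
    Antitone (fun k => l.getD k 0) := by
  intro i j hij
  simp only
  rcases lt_or_ge j l.length with hj | hj
  · have hi : i < l.length := lt_of_le_of_lt hij hj
    rw [List.getD_eq_getElem l 0 hj, List.getD_eq_getElem l 0 hi]
    rcases eq_or_lt_of_le hij with rfl | hlt
    · exact le_rfl
    · exact List.pairwise_iff_getElem.mp h i j hi hj hlt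
  · rw [List.getD_eq_default l 0 hj]
    exact Nat.zero_le _

/-- The partition whose multiset of (nonzero) parts is the multiset of nonzero
elements of `m`. -/
def ofMul (m : Multiset ℕ) : PartitionSeq where
  parts := fun k => ((m.sort (· ≤ ·)).reverse).getD k 0
  antitone' := by
    apply sorted_getD_antitone
    rw [List.pairwise_reverse]
    exact Multiset.pairwise_sort m (· ≤ ·)
  exists_zero := ⟨((m.sort (· ≤ ·)).reverse).length, List.getD_eq_default _ _ le_rfl⟩

/-- The size `|λ|` of a partition: the sum of its parts. -/
def size (p : PartitionSeq) : ℕ := ∑ i ∈ Finset.range (Nat.find p.exists_zero), p.parts i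

lemma finite_gt (p : PartitionSeq) (k : ℕ) : {i : ℕ | k < p.parts i}.Finite := by
  obtain ⟨N, hN⟩ := p.exists_zero
  apply (Set.finite_Iio N).subset
  intro i hi
  simp only [Set.mem_setOf_eq] at hi
  by_contra hc
  simp only [Set.mem_Iio, not_lt] at hc
  have := p.antitone' hc
  omega

/-- The conjugate (transpose) partition. -/
def conj (p : PartitionSeq) : PartitionSeq where
  parts := fun k => {i : ℕ | k < p.parts i}.ncard
  antitone' := fun a b hab =>
    Set.ncard_le_ncard (fun i hi => lt_of_le_of_lt hab hi) (p.finite_gt a)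
  exists_zero := by
    refine ⟨p.parts 0, ?_⟩
    have h : {i : ℕ | p.parts 0 < p.parts i} = ∅ := by
      ext i
      simp only [Set.mem_setOf_eq, Set.mem_empty_iff_false, iff_false, not_lt]
      exact p.antitone' (Nat.zero_le i)
    show {i : ℕ | p.parts 0 < p.parts i}.ncard = 0
    rw [h, Set.ncard_empty]

/-- The 180°-rotation of the complement of `p` inside the rectangle with
`rows` rows of length `c`: the partition `(c - p_rows, c - p_{rows-1}, …, c - p₁)`. -/
def rotCompl (c rows : ℕ) (p : PartitionSeq) : PartitionSeq where
  parts := fun k => if k < rows then c - p.parts (rows - 1 - k) else 0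
  antitone' := by
    intro a b hab
    by_cases hb : b < rows
    · have ha : a < rows := lt_of_le_of_lt hab hb
      simp only [if_pos hb, if_pos ha]
      exact Nat.sub_le_sub_left (p.antitone' (by omega)) c
    · simp only [if_neg hb]
      exact Nat.zero_le _
  exists_zero := ⟨rows, by simp⟩

end PartitionSeq

/-- A bipartition: a pair of partitions. -/
abbrev Bipartition := PartitionSeq × PartitionSeq

/-- The size of a bipartition. -/
def Bipartition.size (l : Bipartition) : ℕ := l.1.size + l.2.size

/-- The bipartition whose components have parts the multisets `a` and `b`. -/
def bip (a b : Multiset ℕ) : Bipartition := (PartitionSeq.ofMul a, PartitionSeq.ofMul b)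

/-- The multiset of parts of the partition `a 1^b` (one part `a`, then `b` parts `1`). -/
def hook (a b : ℕ) : Multiset ℕ := a ::ₘ Multiset.replicate b 1

/-- The charged β-set of a partition, as a sequence:
`betaSet p s i = λ_{i+1} + s - (i+1) + 1`. -/
def betaSet (p : PartitionSeq) (s : ℤ) (i : ℕ) : ℤ := (p.parts i : ℤ) + s - i

/-- The charged symbol of a bipartition with charge `σ`, as a pair of subsets of `ℤ`. -/
def symbolOf (l : Bipartition) (σ : ℤ × ℤ) : Set ℤ × Set ℤ :=
  (Set.range (betaSet l.1 σ.1), Set.range (betaSet l.2 σ.2))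

/-- The charge `σ_t`. -/
def sigmaT (t : ℕ) : ℤ × ℤ :=
  if Even t then ((t : ℤ), -1 - (t : ℤ)) else (-1 - (t : ℤ), (t : ℤ))

/-- The trivial symbol `({0,-1,-2,…},{-1,-2,-3,…})`, the symbol of the empty
bipartition with charge `σ₀ = (0,-1)`. -/
def trivialSymbol : Set ℤ × Set ℤ := ({z : ℤ | z ≤ 0}, {z : ℤ | z ≤ -1})

/-- Removing one `n`-co-hook from the symbol `Λ`, yielding `Λ'`: remove `x+n` from one
row, adjoin `x` to the other row, and exchange the two rows. -/
def CohookStep (n : ℕ) (Λ Λ' : Set ℤ × Set ℤ) : Prop :=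
  (∃ x : ℤ, x + n ∈ Λ.1 ∧ x ∉ Λ.2 ∧ Λ' = (Λ.2 ∪ {x}, Λ.1 \ {x + n})) ∨
  (∃ x : ℤ, x + n ∈ Λ.2 ∧ x ∉ Λ.1 ∧ Λ' = (Λ.2 \ {x + n}, Λ.1 ∪ {x}))

/-- `C` is the `n`-co-core of `Λ`: it is obtained from `Λ` by recursively removing
`n`-co-hooks, and no further `n`-co-hook can be removed. -/
def IsCocore (n : ℕ) (Λ C : Set ℤ × Set ℤ) : Prop :=
  Relation.ReflTransGen (CohookStep n) Λ C ∧ ∀ C', ¬ CohookStep n C C'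

/-- Number of entries of the charged β-set of `p` that are `≥ α` (with multiplicity). -/
def betaCountGE (p : PartitionSeq) (s α : ℤ) : ℕ := Nat.card {i : ℕ // α ≤ betaSet p s i}

/-- Number of entries `≥ α`, with multiplicity, of the multiset union of the two rows
of the symbol of `l` with charge `σ`. -/
def symCountGE (l : Bipartition) (σ : ℤ × ℤ) (α : ℤ) : ℕ :=
  betaCountGE l.1 σ.1 α + betaCountGE l.2 σ.2 α

/-- The composition `ϖ_Λ` of the symbol of `l` with charge `σ`: `comp l σ k` is the
`(k+1)`-st largest entry (with multiplicity) of the multiset union of the two rows. -/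
def comp (l : Bipartition) (σ : ℤ × ℤ) (k : ℕ) : ℤ :=
  sSup {z : ℤ | k + 1 ≤ symCountGE l σ z}

/-- All partial sums of the composition of the symbol `(l,σ)` are bounded by those of
`(m,τ)`. -/
def DomLE (l : Bipartition) (σ : ℤ × ℤ) (m : Bipartition) (τ : ℤ × ℤ) : Prop :=
  ∀ j : ℕ, ∑ k ∈ Finset.range j, comp l σ k ≤ ∑ k ∈ Finset.range j, comp m τ k

/-- Strict dominance `Λ ⊲ Λ'` of symbols: the compositions differ and all partial sums
of the first are bounded by those of the second. -/
def DomLT (l : Bipartition) (σ : ℤ × ℤ) (m : Bipartition) (τ : ℤ × ℤ) : Prop :=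
  comp l σ ≠ comp m τ ∧ DomLE l σ m τ

/-- A box `(x, y, j)` (0-indexed row `x`, 0-indexed column `y`, component `j`:
`j = 0` is the first component, `j = 1` the second). -/
abbrev Box := ℕ × ℕ × Fin 2

/-- The component of a bipartition selected by `j : Fin 2`. -/
def Bipartition.partsOf (l : Bipartition) (j : Fin 2) : PartitionSeq := if j = 0 then l.1 else l.2

/-- Membership of a box in the Young diagram of a bipartition. -/
def MemY (l : Bipartition) (b : Box) : Prop := b.2.1 < (l.partsOf b.2.2).parts b.1

/-- The entry of the charge `σ` corresponding to component `j`. -/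
def chargeOf (σ : ℤ × ℤ) (j : Fin 2) : ℤ := if j = 0 then σ.1 else σ.2

/-- The charged content `co^σ(b) = y - x + σ_j` of a box. -/
def content (σ : ℤ × ℤ) (b : Box) : ℤ := (b.2.1 : ℤ) - (b.1 : ℤ) + chargeOf σ b.2.2

/-- `j(b) ∈ {1,2}`: the component of a box, numbered 1 or 2. -/
def jval (b : Box) : ℕ := (b.2.2 : ℕ) + 1

/-- The counting function of the Dunkl–Griffeth order. -/
def dgCount (l : Bipartition) (s : ℤ × ℤ) (d : ℕ) (α : ℝ) (j : ℕ) : ℕ :=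
  Nat.card {b : Box // MemY l b ∧
    (α < (content s b : ℝ) - (jval b : ℝ) * (d : ℝ) / 2 ∨
      ((content s b : ℝ) - (jval b : ℝ) * (d : ℝ) / 2 = α ∧ jval b ≤ j))}

/-- The Dunkl–Griffeth order `λ ⪯_s μ` (with respect to `d`). -/
def DGLE (l m : Bipartition) (s : ℤ × ℤ) (d : ℕ) : Prop :=
  ∀ (α : ℝ), ∀ j ∈ ({1, 2} : Set ℕ), dgCount l s d α j ≤ dgCount m s d α j

/-- A box of the extended Young diagram: rows are infinite to the left, so the column
coordinate is an integer.  `(x, y, j)` is the box in (0-indexed) row `x`, with integer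
column coordinate `y` (`y = 0` is the first column), in component `j`. -/
abbrev ExtBox := ℕ × ℤ × Fin 2

/-- Membership in the extended Young diagram of a bipartition. -/
def MemExtY (l : Bipartition) (b : ExtBox) : Prop :=
  b.2.1 < ((l.partsOf b.2.2).parts b.1 : ℤ)

/-- The charged content of an extended box. -/
def contentExt (σ : ℤ × ℤ) (b : ExtBox) : ℤ := b.2.1 - (b.1 : ℤ) + chargeOf σ b.2.2

/-- `b` is a removable box of the bipartition `l`. -/
def Removable (l : Bipartition) (b : Box) : Prop :=
  (l.partsOf b.2.2).parts b.1 = b.2.1 + 1 ∧ (l.partsOf b.2.2).parts (b.1 + 1) ≤ b.2.1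

/-- `b` is an addable box of the bipartition `l`. -/
def Addable (l : Bipartition) (b : Box) : Prop :=
  (l.partsOf b.2.2).parts b.1 = b.2.1 ∧
    (b.1 = 0 ∨ b.2.1 + 1 ≤ (l.partsOf b.2.2).parts (b.1 - 1))

/-- The order in which boxes are listed in the `i`-word: increasing charged content,
a component-2 box preceding a component-1 box of equal charged content. -/
def BoxLT (σ : ℤ × ℤ) (b b' : Box) : Prop :=
  content σ b < content σ b' ∨
    (content σ b = content σ b' ∧ b.2.2 = 1 ∧ b'.2.2 = 0)

/-- `L` is the list of boxes underlying the `i`-word of `(l, σ)` with respect to `d`: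
it lists, in increasing order, exactly the addable and removable boxes of `l` whose
charged content is congruent to `i` modulo `d`. -/
def IsIWord (l : Bipartition) (σ : ℤ × ℤ) (d : ℕ) (i : ZMod d) (L : List Box) : Prop :=
  L.Pairwise (BoxLT σ) ∧
    ∀ b : Box, b ∈ L ↔ ((Addable l b ∨ Removable l b) ∧ ((content σ b : ZMod d) = i))

/-- The sign of a box in the `i`-word: `true` (`+`) for addable, `false` (`−`) for
removable boxes. -/
def signOf (l : Bipartition) (b : Box) : Bool := if Addable l b then true else false

/-- One reduction step on words: delete an adjacent pair `−+`. -/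
def RedStep (w w' : List Bool) : Prop :=
  ∃ u v : List Bool, w = u ++ false :: true :: v ∧ w' = u ++ v

/-- `ẽ_i l = 0`: the reduced `i`-word of `(l, σ)` contains no `−`, i.e. the `i`-word
reduces to a word consisting only of `+`'s. -/
def AnnihilatedE (l : Bipartition) (σ : ℤ × ℤ) (d : ℕ) (i : ZMod d) : Prop :=
  ∃ L : List Box, IsIWord l σ d i L ∧
    ∃ a : ℕ, Relation.ReflTransGen RedStep (L.map (signOf l)) (List.replicate a true)

/-- `q` is obtained from the partition `p` by adding one box. -/
def PCovers (p q : PartitionSeq) : Prop :=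
  ∃ x : ℕ, q.parts x = p.parts x + 1 ∧ ∀ y : ℕ, y ≠ x → q.parts y = p.parts y

/-- `m` is obtained from the bipartition `l` by adding one box to its Young diagram. -/
def BipCovers (l m : Bipartition) : Prop :=
  (PCovers l.1 m.1 ∧ m.2 = l.2) ∨ (m.1 = l.1 ∧ PCovers l.2 m.2)

/-- `A(l) = Σ_μ μ`, the sum over all bipartitions obtained from `l` by adding one box,
as an element of the group of `ℤ`-valued functions on bipartitions. -/
def addB (l : Bipartition) : Bipartition → ℤ := fun m => if BipCovers l m then 1 else 0

/-- The projection `π_S` onto the span of the bipartitions lying in `S`. -/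
def projS (S : Set Bipartition) (f : Bipartition → ℤ) : Bipartition → ℤ :=
  fun m => if m ∈ S then f m else 0

/-- The basis element of `ℤ[BP]` corresponding to a bipartition. -/
def deltaB (l : Bipartition) : Bipartition → ℤ := fun m => if m = l then 1 else 0

/-- The bipartitions of `2n` labelling the principal-series unipotent characters in
the principal `Φ_{2n}`-block. -/
def PS (n : ℕ) : Set Bipartition :=
  {l | (∃ i j : ℕ, 0 < i ∧ i < n ∧ j ≤ n ∧
          l = bip (hook (n - i) j) (hook (n - j + 1) (i - 1))) ∨
       (∃ j : ℕ, j < 2 * n ∧ l = bip (hook (2 * n - j) j) 0) ∨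
       (∃ i : ℕ, 0 < i ∧ i ≤ 2 * n ∧ l = bip 0 (hook (2 * n - i + 1) (i - 1)))}

/-- The bipartitions of `2n-2` labelling the `B₂`-series unipotent characters in the
principal `Φ_{2n}`-block: `2^i 1^{j-i-1} . (n-i-1)(n-j)` for `0 ≤ i < j ≤ n`. -/
def LB2 (n : ℕ) : Set Bipartition :=
  {l | ∃ i j : ℕ, i < j ∧ j ≤ n ∧
        l = bip (Multiset.replicate i 2 + Multiset.replicate (j - i - 1) 1)
                {n - i - 1, n - j}}

/-- The bipartitions of `2n-6` labelling the `B₆`-series unipotent characters in the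
principal `Φ_{2n}`-block: `(n-i-2)(n-j-1) . 2^{i-1} 1^{j-i-1}` for `0 < i < j < n`. -/
def LB6 (n : ℕ) : Set Bipartition :=
  {l | ∃ i j : ℕ, 0 < i ∧ i < j ∧ j < n ∧
        l = bip {n - i - 2, n - j - 1}
                (Multiset.replicate (i - 1) 2 + Multiset.replicate (j - i - 1) 1)}

end

/-!
Write `N(α)` for the number of entries `≥ α`, with multiplicity, of a symbol; the composition is
read off from `N`. If `B` exceeds every entry, the tail sums `∑_{α ≤ β ≤ B} N(β)` equal
`∑_k (ϖ_k - α + 1)⁺`, so dominance of compositions gives the pointwise inequality of tail sums.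
For `α` small enough a tail sum only depends on the size and the charge, and `σ_t` contributes
exactly `t² + t` more than `σ₀`: there the tail sums of `Λ'` and `Λ` agree.

Both rows of a symbol are sets, so `N` drops by at most `2` from `α` to `α + 1`, whereas the
counting function of `1^{2n}.∅` drops by exactly `2` except at `0` and at `1 - 2n`. Dominance at
`α = 2, 1, 0` gives `N = 0` above `1`, `N(1) ≤ 1` and, if `N(1) = 1`, `N(0) ≤ 2`. In that case the
difference with the counting function of `1^{2n}.∅` is nondecreasing below `1 - 2n` and on
`[2 - 2n, 0]`, drops by at most one in between, is `≤ 0` at `0` and sums to zero, so it vanishes,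
which `Λ' ≠ Λ` excludes. If `N(1) = 0`, the same argument with the drop at `-2n` identifies `N`
with the counting function of `∅.1^{2n}`.
-/

open Finset Filter

namespace PartitionSeq

def length (p : PartitionSeq) : ℕ := Nat.find p.exists_zero

lemma parts_eq_zero_of_length_le {p : PartitionSeq} {i : ℕ} (h : p.length ≤ i) :
    p.parts i = 0 :=
  Nat.eq_zero_of_le_zero (Nat.find_spec p.exists_zero ▸ p.antitone' h)

lemma sum_range_parts {p : PartitionSeq} {c : ℕ} (h : p.length ≤ c) :
    ∑ i ∈ range c, p.parts i = p.size :=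
  (sum_subset (range_subset_range.2 h) fun _ _ hic =>
    parts_eq_zero_of_length_le (by simpa using hic)).symm

end PartitionSeq

section BetaSet

variable (p : PartitionSeq) (s : ℤ)

lemma betaSet_add_le {i j : ℕ} (h : i ≤ j) : betaSet p s j + j ≤ betaSet p s i + i := by
  have := p.antitone' h
  simp only [betaSet]
  omega

lemma lt_betaCountGE_iff (i : ℕ) (α : ℤ) : i < betaCountGE p s α ↔ α ≤ betaSet p s i := by
  have hex : ∃ k, betaSet p s k < α := by
    refine ⟨(betaSet p s 0 - α + 1).toNat, ?_⟩
    have := betaSet_add_le p s (Nat.zero_le (betaSet p s 0 - α + 1).toNat)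
    push_cast at this
    omega
  have hIio : ∀ j, α ≤ betaSet p s j ↔ j < Nat.find hex := fun j => by
    refine ⟨fun hj => ?_, fun hj => not_lt.1 (Nat.find_min hex hj)⟩
    by_contra hfind
    have := betaSet_add_le p s (not_lt.1 hfind)
    have := Nat.find_spec hex
    omega
  have hcard : betaCountGE p s α = Nat.find hex := by
    rw [betaCountGE, Nat.card_congr (Equiv.subtypeEquivRight hIio),
      ← Nat.card_congr Fin.equivSubtype, Nat.card_eq_fintype_card, Fintype.card_fin]
  rw [hcard, hIio]

lemma betaCountGE_of_le {α : ℤ} (hα : α ≤ s + 1 - p.length) :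
    betaCountGE p s α = (s + 1 - α).toNat := by
  refine eq_of_forall_lt_iff fun i => ?_
  rw [lt_betaCountGE_iff]
  rcases lt_or_ge i p.length with hi | hi
  · have := (p.parts i).zero_le
    simp only [betaSet]
    omega
  · simp only [betaSet, PartitionSeq.parts_eq_zero_of_length_le hi]
    omega

lemma betaCountGE_eq_zero {α : ℤ} (hα : p.parts 0 + s < α) : betaCountGE p s α = 0 := by
  refine Nat.eq_zero_of_not_pos fun h => ?_
  have := betaSet_add_le p s (Nat.zero_le 0)
  have := (lt_betaCountGE_iff p s 0 α).1 h
  simp only [betaSet] at *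
  omega

lemma betaCountGE_le_succ (α : ℤ) : betaCountGE p s α ≤ betaCountGE p s (α + 1) + 1 := by
  by_contra! h
  have h1 := (lt_betaCountGE_iff p s (betaCountGE p s (α + 1) + 1) α).1 h
  have h2 := (lt_betaCountGE_iff p s (betaCountGE p s (α + 1)) (α + 1)).not.1 (lt_irrefl _)
  have := betaSet_add_le p s (Nat.le_add_right (betaCountGE p s (α + 1)) 1)
  push_cast at this
  omega

lemma betaCountGE_anti : Antitone (betaCountGE p s) :=
  fun α β h => le_of_forall_lt fun i hi =>
    (lt_betaCountGE_iff p s i α).2 (h.trans ((lt_betaCountGE_iff p s i β).1 hi))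

end BetaSet

section Symbol

variable (l : Bipartition) (σ : ℤ × ℤ)

lemma symCountGE_anti : Antitone (symCountGE l σ) :=
  fun _ _ h => add_le_add (betaCountGE_anti _ _ h) (betaCountGE_anti _ _ h)

lemma symCountGE_le_succ (α : ℤ) : symCountGE l σ α ≤ symCountGE l σ (α + 1) + 2 := by
  have := betaCountGE_le_succ l.1 σ.1 α
  have := betaCountGE_le_succ l.2 σ.2 α
  simp only [symCountGE]
  omega

lemma exists_symCountGE_eq_zero : ∃ B, ∀ z, B < z → symCountGE l σ z = 0 :=
  ⟨max (l.1.parts 0 + σ.1) (l.2.parts 0 + σ.2), fun z hz => by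
    simp only [symCountGE, betaCountGE_eq_zero _ _ (lt_of_le_of_lt (le_max_left _ _) hz),
      betaCountGE_eq_zero _ _ (lt_of_le_of_lt (le_max_right _ _) hz)]⟩

lemma eventually_symCountGE_eq :
    ∀ᶠ α in atBot, (symCountGE l σ α : ℤ) = σ.1 + σ.2 + 2 - 2 * α := by
  refine eventually_atBot.2 ⟨min (σ.1 + 1 - l.1.length) (σ.2 + 1 - l.2.length), fun α hα => ?_⟩
  rw [symCountGE, betaCountGE_of_le _ _ (hα.trans (min_le_left _ _)),
    betaCountGE_of_le _ _ (hα.trans (min_le_right _ _))]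
  omega

lemma lt_symCountGE_iff (k : ℕ) (z : ℤ) : k < symCountGE l σ z ↔ z ≤ comp l σ k := by
  have hne : {z : ℤ | k + 1 ≤ symCountGE l σ z}.Nonempty := by
    obtain ⟨w, hw, hwk⟩ := ((eventually_symCountGE_eq l σ).and
      (eventually_le_atBot (-(k : ℤ) + min 0 (σ.1 + σ.2)))).exists
    exact ⟨w, by simp only [Set.mem_ofPred_eq]; omega⟩
  have hbdd : BddAbove {z : ℤ | k + 1 ≤ symCountGE l σ z} := by
    obtain ⟨B, hB⟩ := exists_symCountGE_eq_zero l σ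
    refine ⟨B, fun w hw => not_lt.1 fun hBw => ?_⟩
    simp only [Set.mem_ofPred_eq, hB w hBw] at hw
    omega
  exact ⟨fun h => le_csSup hbdd h,
    fun h => lt_of_lt_of_le (Int.csSup_mem hne hbdd) (symCountGE_anti l σ h)⟩

lemma comp_congr {l m : Bipartition} {σ τ : ℤ × ℤ} (h : symCountGE l σ = symCountGE m τ) :
    comp l σ = comp m τ := by
  unfold comp
  rw [h]

end Symbol

noncomputable def tailSum (N : ℤ → ℕ) (α B : ℤ) : ℤ := ∑ β ∈ Icc α B, (N β : ℤ)

section TailSum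

variable {N : ℤ → ℕ} {α B : ℤ}

lemma tailSum_eq_add (h : α ≤ B) : tailSum N α B = N α + tailSum N (α + 1) B := by
  rw [tailSum, Icc_eq_cons_Ioc h, sum_cons, ← Icc_add_one_left_eq_Ioc, tailSum]

lemma tailSum_eq_zero (h : ∀ z, α ≤ z → N z = 0) : tailSum N α B = 0 :=
  sum_eq_zero fun z hz => by simp [h z (mem_Icc.1 hz).1]

end TailSum

section CountingFunction

variable {N : ℤ → ℕ} {f : ℕ → ℤ} {B : ℤ}

lemma tailSum_eq_sum_range (hf : ∀ i β, i < N β ↔ β ≤ f i) (hB : ∀ z, B < z → N z = 0)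
    (α : ℤ) : tailSum N α B = ∑ i ∈ range (N α), (f i - α + 1) := by
  have hfB : ∀ i, f i ≤ B := fun i => not_lt.1 fun h => by
    simpa [hB _ h] using (hf i (f i)).2 le_rfl
  have hN : ∀ β ∈ Icc α B, (N β : ℤ) = ∑ i ∈ range (N α), if β ≤ f i then 1 else 0 := by
    intro β hβ
    have hfilter : {i ∈ range (N α) | β ≤ f i} = range (N β) := by
      ext i
      have := (hf i α).2
      have := hf i β
      simp only [mem_filter, mem_range, mem_Icc] at hβ ⊢
      omega
    rw [sum_boole, hfilter, card_range]
  rw [tailSum, sum_congr rfl hN, sum_comm]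
  refine sum_congr rfl fun i hi => ?_
  have := (hf i α).1 (mem_range.1 hi)
  have hfilter : {β ∈ Icc α B | β ≤ f i} = Icc α (f i) := by
    ext β
    have := hfB i
    simp only [mem_filter, mem_Icc]
    omega
  rw [sum_boole, hfilter, Int.card_Icc]
  omega

lemma sum_range_le_tailSum (hf : ∀ i β, i < N β ↔ β ≤ f i) (hB : ∀ z, B < z → N z = 0)
    (α : ℤ) (j : ℕ) : ∑ i ∈ range j, (f i - α + 1) ≤ tailSum N α B := by
  rw [tailSum_eq_sum_range hf hB]
  rcases le_total j (N α) with h | h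
  · refine sum_le_sum_of_subset_of_nonneg (range_subset_range.2 h) fun i hi _ => ?_
    have := (hf i α).1 (mem_range.1 hi)
    omega
  · rw [← sum_range_add_sum_Ico _ h, add_le_iff_nonpos_right]
    refine sum_nonpos fun i hi => ?_
    have := (hf i α).not.1 (by simp only [mem_Ico] at hi; omega)
    omega

end CountingFunction

lemma tailSum_le_of_domLE {l m : Bipartition} {σ τ : ℤ × ℤ} {B : ℤ} (h : DomLE l σ m τ)
    (hl : ∀ z, B < z → symCountGE l σ z = 0) (hm : ∀ z, B < z → symCountGE m τ z = 0)
    (α : ℤ) : tailSum (symCountGE l σ) α B ≤ tailSum (symCountGE m τ) α B := by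
  rw [tailSum_eq_sum_range (lt_symCountGE_iff l σ) hl]
  refine le_trans ?_ (sum_range_le_tailSum (lt_symCountGE_iff m τ) hm α (symCountGE l σ α))
  have := h (symCountGE l σ α)
  simp only [sum_add_distrib, sum_sub_distrib, sum_const, card_range, nsmul_eq_mul]
  linarith

lemma two_mul_sum_range_sub (c : ℕ) : 2 * ∑ i ∈ range c, ((c : ℤ) - i) = c * (c + 1) := by
  have hgauss : 2 * ∑ i ∈ range c, (i : ℤ) = c * (c - 1) := by
    induction c with
    | zero => simp
    | succ c ih =>
      rw [sum_range_succ]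
      push_cast
      linarith
  rw [sum_sub_distrib, sum_const, card_range, nsmul_eq_mul]
  linarith

lemma two_mul_tailSum_betaCountGE (p : PartitionSeq) (s : ℤ) {α B : ℤ}
    (hα : α ≤ s + 1 - p.length) (hB : ∀ z, B < z → betaCountGE p s z = 0) :
    2 * tailSum (betaCountGE p s) α B = 2 * p.size + (s + 1 - α) * (s + 2 - α) := by
  rw [tailSum_eq_sum_range (lt_betaCountGE_iff p s) hB, betaCountGE_of_le p s hα]
  set c := (s + 1 - α).toNat with hc
  have hterm : ∀ i ∈ range c, betaSet p s i - α + 1 = p.parts i + ((c : ℤ) - i) := by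
    intro i _
    simp only [betaSet]
    omega
  rw [sum_congr rfl hterm, sum_add_distrib, ← Nat.cast_sum,
    PartitionSeq.sum_range_parts (by omega), mul_add, two_mul_sum_range_sub]
  have : (c : ℤ) = s + 1 - α := by omega
  rw [this]
  ring

lemma eventually_two_mul_tailSum_symCountGE (l : Bipartition) (σ : ℤ × ℤ) :
    ∀ᶠ α in atBot, ∀ B, (∀ z, B < z → symCountGE l σ z = 0) →
      2 * tailSum (symCountGE l σ) α B =
        2 * l.size + (σ.1 + 1 - α) * (σ.1 + 2 - α) + (σ.2 + 1 - α) * (σ.2 + 2 - α) := by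
  refine eventually_atBot.2 ⟨min (σ.1 + 1 - l.1.length) (σ.2 + 1 - l.2.length),
    fun α hα B hB => ?_⟩
  have hsplit : tailSum (symCountGE l σ) α B =
      tailSum (betaCountGE l.1 σ.1) α B + tailSum (betaCountGE l.2 σ.2) α B := by
    simp only [tailSum, symCountGE, Nat.cast_add, sum_add_distrib]
  rw [hsplit, mul_add,
    two_mul_tailSum_betaCountGE _ _ (hα.trans (min_le_left _ _)) fun z hz => by
      have := hB z hz; simp only [symCountGE] at this; omega,
    two_mul_tailSum_betaCountGE _ _ (hα.trans (min_le_right _ _)) fun z hz => by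
      have := hB z hz; simp only [symCountGE] at this; omega,
    Bipartition.size]
  push_cast
  ring

lemma sigmaT_zero : sigmaT 0 = (0, -1) := by
  simp [sigmaT]

lemma sigmaT_fst_add_snd (t : ℕ) : (sigmaT t).1 + (sigmaT t).2 = -1 := by
  unfold sigmaT
  split_ifs <;> ring

lemma sigmaT_fst_mul_snd (t : ℕ) : (sigmaT t).1 * (sigmaT t).2 = -((t : ℤ) ^ 2 + t) := by
  unfold sigmaT
  split_ifs <;> ring

lemma eventually_tailSum_sigmaT_eq {l l' : Bipartition} {t : ℕ}
    (h : l.size + (t ^ 2 + t) = l'.size) :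
    ∀ᶠ α in atBot, ∀ B, (∀ z, B < z → symCountGE l (sigmaT t) z = 0) →
      (∀ z, B < z → symCountGE l' (sigmaT 0) z = 0) →
        tailSum (symCountGE l (sigmaT t)) α B = tailSum (symCountGE l' (sigmaT 0)) α B := by
  filter_upwards [eventually_two_mul_tailSum_symCountGE l (sigmaT t),
    eventually_two_mul_tailSum_symCountGE l' (sigmaT 0)] with α hl hl' B hB hB'
  have e := hl B hB
  have e' := hl' B hB'
  have hsum := sigmaT_fst_add_snd t
  have hmul := sigmaT_fst_mul_snd t
  have hsize : (l.size : ℤ) + (t ^ 2 + t) = l'.size := by exact_mod_cast h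
  rw [sigmaT_zero] at e' ⊢
  dsimp only at e'
  have : 2 * tailSum (symCountGE l (sigmaT t)) α B =
      2 * tailSum (symCountGE l' (0, -1)) α B := by
    linear_combination e - e' + ((sigmaT t).1 + (sigmaT t).2 + 2 - 2 * α) * hsum - 2 * hmul
      + 2 * hsize
  linarith

lemma parts_ofMul_replicate_one (m k : ℕ) :
    (PartitionSeq.ofMul (Multiset.replicate m 1)).parts k = if k < m then 1 else 0 := by
  have hsort : (Multiset.replicate m 1).sort (· ≤ ·) = List.replicate m 1 :=
    List.eq_replicate_iff.2 ⟨by simp, fun b hb =>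
      Multiset.eq_of_mem_replicate ((Multiset.mem_sort _).1 hb)⟩
  simp only [PartitionSeq.ofMul, hsort, List.reverse_replicate]
  split_ifs with h
  · simp [h]
  · rw [List.getD_eq_default _ _ (by simpa using h)]

lemma size_ofMul_replicate_one (m : ℕ) :
    (PartitionSeq.ofMul (Multiset.replicate m 1)).size = m := by
  have hlen : (PartitionSeq.ofMul (Multiset.replicate m 1)).length ≤ m :=
    Nat.find_min' _ (by simp [parts_ofMul_replicate_one])
  rw [← PartitionSeq.sum_range_parts hlen]
  simp [parts_ofMul_replicate_one, filter_true_of_mem fun _ => mem_range.1]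

lemma betaCountGE_ofMul_replicate_one (m : ℕ) (s α : ℤ) :
    betaCountGE (PartitionSeq.ofMul (Multiset.replicate m 1)) s α =
      if α ≤ s + 1 - m then (s + 1 - α).toNat else (s + 2 - α).toNat := by
  refine eq_of_forall_lt_iff fun i => ?_
  rw [lt_betaCountGE_iff, betaSet, parts_ofMul_replicate_one]
  split_ifs <;> push_cast <;> omega

lemma size_bip_replicate_one_zero (m : ℕ) : (bip (Multiset.replicate m 1) 0).size = m := by
  rw [← Multiset.replicate_zero 1, Bipartition.size, bip, size_ofMul_replicate_one,
    size_ofMul_replicate_one, add_zero]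

def countOnesEmpty (n : ℕ) (α : ℤ) : ℕ :=
  (if α ≤ 1 - 2 * n then (1 - α).toNat else (2 - α).toNat) + (-α).toNat

def countEmptyOnes (n : ℕ) (α : ℤ) : ℕ :=
  (1 - α).toNat + if α ≤ -(2 * n) then (-α).toNat else (1 - α).toNat

lemma symCountGE_onesEmpty (n : ℕ) :
    symCountGE (bip (Multiset.replicate (2 * n) 1) 0) (sigmaT 0) = countOnesEmpty n := by
  funext α
  rw [← Multiset.replicate_zero 1, symCountGE, sigmaT_zero, bip,
    betaCountGE_ofMul_replicate_one, betaCountGE_ofMul_replicate_one, countOnesEmpty]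
  push_cast
  split_ifs <;> omega

lemma symCountGE_emptyOnes (n : ℕ) :
    symCountGE (bip 0 (Multiset.replicate (2 * n) 1)) (sigmaT 0) = countEmptyOnes n := by
  funext α
  rw [← Multiset.replicate_zero 1, symCountGE, sigmaT_zero, bip,
    betaCountGE_ofMul_replicate_one, betaCountGE_ofMul_replicate_one, countEmptyOnes]
  push_cast
  split_ifs <;> omega

lemma le_of_forall_le_add_one {G : ℤ → ℤ} {x y : ℤ} (hxy : x ≤ y)
    (h : ∀ z, x ≤ z → z < y → G z ≤ G (z + 1)) : G x ≤ G y := by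
  induction y, hxy using Int.leInduction with
  | base => exact le_rfl
  | succ y hxy ih => exact (ih fun z h₁ h₂ => h z h₁ (by omega)).trans (h y hxy (by omega))

lemma eq_zero_of_sum_eq_zero_of_step_le {G : ℤ → ℤ} {A b c B : ℤ} (hAb : A ≤ b) (hbc : b < c)
    (hcB : c ≤ B) (hlow : ∀ z ≤ A, G z = 0)
    (hstep : ∀ z, A ≤ z → z < c → G z ≤ G (z + 1) + if z = b then 1 else 0) (hc : G c ≤ 0)
    (hhigh : ∀ z, c < z → G z = 0) (hsum : ∑ z ∈ Icc A B, G z = 0) : G = 0 := by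
  have hmono : ∀ x y, A ≤ x → x ≤ y → (y ≤ b ∨ b < x) → y ≤ c → G x ≤ G y :=
    fun x y hx hxy hb hy => le_of_forall_le_add_one hxy fun z h₁ h₂ => by
      have := hstep z (by omega) (by omega)
      rw [if_neg (by omega)] at this
      simpa using this
  have hjump : G b ≤ G (b + 1) + 1 := by simpa using hstep b hAb hbc
  have hlower : ∀ z, A ≤ z → z ≤ b → 0 ≤ G z ∧ G z ≤ G b := fun z h₁ h₂ =>
    ⟨hlow A le_rfl ▸ hmono A z le_rfl h₁ (.inl h₂) (by omega),
      hmono z b h₁ h₂ (.inl le_rfl) hbc.le⟩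
  have hupper : ∀ z, b < z → z ≤ c → G (b + 1) ≤ G z ∧ G z ≤ 0 := fun z h₁ h₂ =>
    ⟨hmono (b + 1) z (by omega) (by omega) (.inr (by omega)) h₂,
      (hmono z c (by omega) h₂ (.inr h₁) le_rfl).trans hc⟩
  have hnonneg : 0 ≤ G (b + 1) := by
    by_contra! hneg
    refine (sum_lt_sum (s := Icc A B) (g := fun _ => (0 : ℤ)) (fun z hz => ?_)
      ⟨b + 1, mem_Icc.2 ⟨by omega, by omega⟩, hneg⟩).ne (by simpa using hsum)
    rcases le_or_gt z b with h₁ | h₁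
    · have := hlower z (mem_Icc.1 hz).1 h₁
      omega
    rcases le_or_gt z c with h₂ | h₂
    · exact (hupper z h₁ h₂).2
    · exact (hhigh z h₂).le
  have hzero := (sum_eq_zero_iff_of_nonneg fun z hz => ?_).1 hsum
  · funext z
    rcases le_or_gt z A with h₁ | h₁
    · exact hlow z h₁
    rcases le_or_gt z B with h₂ | h₂
    · exact hzero z (mem_Icc.2 ⟨h₁.le, h₂⟩)
    · exact hhigh z (by omega)
  rcases le_or_gt z b with h₁ | h₁
  · exact (hlower z (mem_Icc.1 hz).1 h₁).1
  rcases le_or_gt z c with h₂ | h₂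
  · exact hnonneg.trans (hupper z h₁ h₂).1
  · exact (hhigh z h₂).ge

section Counts

variable {n : ℕ} {N : ℤ → ℕ} {A B : ℤ}

lemma countOnesEmpty_of_two_le {z : ℤ} (hz : 2 ≤ z) : countOnesEmpty n z = 0 := by
  simp only [countOnesEmpty]
  split_ifs <;> omega

lemma countOnesEmpty_sub_countEmptyOnes (z : ℤ) : (countOnesEmpty n z : ℤ) - countEmptyOnes n z =
    (if z = 1 then 1 else 0) - if z = 1 - 2 * n then 1 else 0 := by
  simp only [countOnesEmpty, countEmptyOnes]
  split_ifs <;> omega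

lemma tailSum_countOnesEmpty_eq (hA : A ≤ 1 - 2 * n) (hB : 1 ≤ B) :
    tailSum (countOnesEmpty n) A B = tailSum (countEmptyOnes n) A B := by
  rw [← sub_eq_zero, tailSum, tailSum, ← sum_sub_distrib,
    sum_congr rfl fun z _ => countOnesEmpty_sub_countEmptyOnes z, sum_sub_distrib,
    sum_ite_eq', sum_ite_eq', if_pos (by simp; omega), if_pos (by simp; omega), sub_self]

lemma counts_of_tailSum_le_countOnesEmpty (hn : 1 ≤ n) (hB : 1 ≤ B) (hhigh : ∀ z, B < z → N z = 0)
    (hdom : ∀ α, tailSum N α B ≤ tailSum (countOnesEmpty n) α B) :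
    (∀ z, 2 ≤ z → N z = 0) ∧ (N 1 = 1 ∧ N 0 ≤ 2 ∨ N 1 = 0) := by
  have hN2 : ∀ z, 2 ≤ z → N z = 0 := by
    intro z hz
    rcases le_or_gt z B with hzB | hzB
    · have h := hdom 2
      rw [tailSum_eq_zero fun _ => countOnesEmpty_of_two_le] at h
      have := single_le_sum (f := fun β => (N β : ℤ)) (fun _ _ => Int.natCast_nonneg _)
        (mem_Icc.2 ⟨hz, hzB⟩)
      rw [tailSum] at h
      omega
    · exact hhigh z hzB
  have hsplit : ∀ M : ℤ → ℕ, (∀ z, 2 ≤ z → M z = 0) →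
      tailSum M 1 B = M 1 ∧ tailSum M 0 B = M 0 + M 1 := fun M hM => by
    have e1 : tailSum M 1 B = M 1 := by
      rw [tailSum_eq_add hB, tailSum_eq_zero fun z hz => hM z (by omega), add_zero]
    rw [tailSum_eq_add (α := 0) (by omega), zero_add, e1]
    exact ⟨rfl, rfl⟩
  have h1 := hdom 1
  have h0 := hdom 0
  rw [(hsplit N hN2).1, (hsplit _ fun _ => countOnesEmpty_of_two_le).1] at h1
  rw [(hsplit N hN2).2, (hsplit _ fun _ => countOnesEmpty_of_two_le).2] at h0
  refine ⟨hN2, ?_⟩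
  simp only [countOnesEmpty] at h1 h0
  split_ifs at h1 h0 <;> omega

lemma eq_countOnesEmpty (hn : 1 ≤ n) (hA : A ≤ 1 - 2 * n) (hB : 1 ≤ B)
    (hstep : ∀ z, N z ≤ N (z + 1) + 2) (hlow : ∀ z ≤ A, N z = countOnesEmpty n z)
    (hN2 : ∀ z, 2 ≤ z → N z = 0) (hN1 : N 1 = 1) (hN0 : N 0 ≤ 2)
    (htotal : tailSum N A B = tailSum (countOnesEmpty n) A B) : N = countOnesEmpty n := by
  have hG := eq_zero_of_sum_eq_zero_of_step_le (G := fun z => (N z : ℤ) - countOnesEmpty n z)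
    (b := 1 - 2 * n) (c := 0) (B := B) hA (by omega) (by omega) (fun z hz => ?_)
    (fun z _ _ => ?_) ?_ (fun z hz => ?_) ?_
  · funext z
    simpa [sub_eq_zero] using congrFun hG z
  · simp [hlow z hz]
  · have := hstep z
    simp only [countOnesEmpty]
    split_ifs <;> omega
  · simp only [countOnesEmpty]
    split_ifs <;> omega
  · rcases eq_or_lt_of_le (show 1 ≤ z by omega) with rfl | hz
    · simp only [countOnesEmpty]
      split_ifs <;> omega
    · simp [hN2 z hz, countOnesEmpty_of_two_le hz]
  · rw [sum_sub_distrib, ← tailSum, ← tailSum, htotal, sub_self]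

lemma eq_countEmptyOnes (hA : A ≤ -(2 * n)) (hB : 1 ≤ B)
    (hstep : ∀ z, N z ≤ N (z + 1) + 2) (hlow : ∀ z ≤ A, N z = countEmptyOnes n z)
    (hN2 : ∀ z, 2 ≤ z → N z = 0) (hN1 : N 1 = 0)
    (htotal : tailSum N A B = tailSum (countEmptyOnes n) A B) : N = countEmptyOnes n := by
  have hG := eq_zero_of_sum_eq_zero_of_step_le (G := fun z => (N z : ℤ) - countEmptyOnes n z)
    (b := -(2 * n)) (c := 1) (B := B) hA (by omega) hB (fun z hz => ?_)
    (fun z _ _ => ?_) ?_ (fun z hz => ?_) ?_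
  · funext z
    simpa [sub_eq_zero] using congrFun hG z
  · simp [hlow z hz]
  · have := hstep z
    simp only [countEmptyOnes]
    split_ifs <;> omega
  · simp only [countEmptyOnes]
    omega
  · simp only [countEmptyOnes, hN2 z (by omega)]
    split_ifs <;> omega
  · rw [sum_sub_distrib, ← tailSum, ← tailSum, htotal, sub_self]

theorem eq_countOnesEmpty_or_eq_countEmptyOnes (hn : 1 ≤ n) (hA : A ≤ -(2 * n)) (hB : 1 ≤ B)
    (hstep : ∀ z, N z ≤ N (z + 1) + 2)
    (hlow : ∀ z ≤ A, N z = countOnesEmpty n z) (hhigh : ∀ z, B < z → N z = 0)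
    (hdom : ∀ α, tailSum N α B ≤ tailSum (countOnesEmpty n) α B)
    (htotal : tailSum N A B = tailSum (countOnesEmpty n) A B) :
    N = countOnesEmpty n ∨ N = countEmptyOnes n := by
  obtain ⟨hN2, ⟨hN1, hN0⟩ | hN1⟩ := counts_of_tailSum_le_countOnesEmpty hn hB hhigh hdom
  · exact .inl (eq_countOnesEmpty hn (by omega) hB hstep hlow hN2 hN1 hN0 htotal)
  refine .inr (eq_countEmptyOnes hA hB hstep (fun z hz => ?_) hN2 hN1
    (htotal.trans (tailSum_countOnesEmpty_eq (by omega) hB)))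
  have := countOnesEmpty_sub_countEmptyOnes (n := n) z
  rw [if_neg (by omega), if_neg (by omega), hlow z hz] at *
  omega

end Counts

/-- If the symbol of charge `σ_t` of a bipartition `μ` of
`2n - t² - t` is strictly dominated by the symbol of `1^{2n}.∅` of charge `σ₀`, then
its composition equals that of the symbol of `∅.1^{2n}` of charge `σ₀`. -/
theorem decomposition_numbers_stmt18 (n : ℕ) (hn : 1 ≤ n) (t : ℕ)
    (ht : t ^ 2 + t ≤ 2 * n) (l : Bipartition)
    (hl : Bipartition.size l = 2 * n - (t ^ 2 + t))
    (hdom : DomLT l (sigmaT t) (bip (Multiset.replicate (2 * n) 1) 0) (sigmaT 0)) :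
    comp l (sigmaT t) = comp (bip 0 (Multiset.replicate (2 * n) 1)) (sigmaT 0) := by
  obtain ⟨hne, hle⟩ := hdom
  set L := bip (Multiset.replicate (2 * n) 1) 0
  have hL : symCountGE L (sigmaT 0) = countOnesEmpty n := symCountGE_onesEmpty n
  have hsize : l.size + (t ^ 2 + t) = L.size := by
    rw [size_bip_replicate_one_zero]
    omega
  obtain ⟨B, hB⟩ := exists_symCountGE_eq_zero l (sigmaT t)
  have hhigh : ∀ z, max B 1 < z → symCountGE l (sigmaT t) z = 0 :=
    fun z hz => hB z ((le_max_left _ _).trans_lt hz)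
  have hhighL : ∀ z, max B 1 < z → symCountGE L (sigmaT 0) z = 0 :=
    fun z hz => hL ▸ countOnesEmpty_of_two_le (by omega)
  obtain ⟨A, hA⟩ := eventually_atBot.1 ((eventually_le_atBot (-(2 * n : ℤ))).and
    ((eventually_symCountGE_eq l (sigmaT t)).and ((eventually_symCountGE_eq L (sigmaT 0)).and
      (eventually_tailSum_sigmaT_eq hsize))))
  have hlow : ∀ z ≤ A, symCountGE l (sigmaT t) z = countOnesEmpty n z := fun z hz => by
    obtain ⟨-, h, hL', -⟩ := hA z hz
    rw [hL, sigmaT_fst_add_snd] at hL'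
    rw [sigmaT_fst_add_snd] at h
    omega
  rcases eq_countOnesEmpty_or_eq_countEmptyOnes hn (hA A le_rfl).1 (le_max_right B 1)
    (symCountGE_le_succ l _) hlow hhigh (fun α => hL ▸ tailSum_le_of_domLE hle hhigh hhighL α)
    (hL ▸ (hA A le_rfl).2.2.2 _ hhigh hhighL) with h | h
  · exact absurd (comp_congr (h.trans hL.symm)) hne
  · exact comp_congr (h.trans (symCountGE_emptyOnes n).symm)
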